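/- Zeilberger's map T is injective: the map sending a pair (π, σ) ∈ A(n) to the pair obtained by, along the alternating chain m_1 = n, w_1 = π(m_1), m_2 = σ^{-1}(w_1), …, ending at w_r ∈ {1′, n′}, swapping the marriage/affair status of the edges (m_i, w_i) (marriages become affairs) and (m_{i+1}, w_i) (affairs become marriages), is an injection from A(n) into B(n) ∪ C(n). -/
import Mathlib


/- We work with `n + 2` people of each sex (so the number of people is at least 2),
men and women both indexed by `Fin (n+2)`; man `0` is "Mr. 1" and man `Fin.last (n+1)`
is "Mr. n", and similarly for women.

A pair `(π, σ)` of total permutations of `Fin (n+2)` encodes an element of one of the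
sets `A(n)`, `B(n)`, `C(n)` of pairs (marriage matching, affair matching) of
Zeilberger's proof, via dummy values at the unused points:
* `A(n)`: `π` is the marriage matching of all men to all women, and the affair
  matching `{2,…,n-1} → {2',…,(n-1)'}` is encoded by a permutation `σ` fixing the
  endpoints `0` and `last`.
* `B(n)`: the marriage matching `{1,…,n-1} → {1',…,(n-1)'}` is encoded by `π` with the
  dummy value `π last = last`, and the affair matching `{2,…,n} → {2',…,n'}` by `σ`
  with dummy value `σ 0 = 0`.
* `C(n)`: the marriage matching `{1,…,n-1} → {2',…,n'}` is encoded by `π` with dummy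
  value `π last = 0`, and the affair matching `{2,…,n} → {1',…,(n-1)'}` by `σ` with
  dummy value `σ 0 = last`. -/

/-- A pair (marriages, affairs) of permutations. -/
abbrev PairPerm (n : ℕ) := Equiv.Perm (Fin (n + 2)) × Equiv.Perm (Fin (n + 2))

/-- The last index (Mr./Ms. `n`). -/
def lastF (n : ℕ) : Fin (n + 2) := Fin.last (n + 1)

/-- The middle indices `{2,…,n-1}` (people having affairs in `A(n)`). -/
def middleF (n : ℕ) : Finset (Fin (n + 2)) := (Finset.univ.erase 0).erase (lastF n)

/-- Membership in `A(n)`: the affair permutation fixes the two endpoints. -/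
def InA {n : ℕ} (p : PairPerm n) : Prop := p.2 0 = 0 ∧ p.2 (lastF n) = lastF n

/-- Membership in `B(n)`: dummy marriage `n ↦ n'`, dummy affair `1 ↦ 1'`. -/
def InB {n : ℕ} (p : PairPerm n) : Prop := p.1 (lastF n) = lastF n ∧ p.2 0 = 0

/-- Membership in `C(n)`: dummy marriage `n ↦ 1'`, dummy affair `1 ↦ n'`. -/
def InC {n : ℕ} (p : PairPerm n) : Prop := p.1 (lastF n) = 0 ∧ p.2 0 = lastF n

/-- The alternating chain of men: `m 0 = n`, and `m (k+1)` is the lover of the wife of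
`m k` (wife: apply `π`; lover: apply `σ⁻¹`). -/
def chainM {n : ℕ} (p : PairPerm n) : ℕ → Fin (n + 2)
  | 0 => lastF n
  | k + 1 => p.2.symm (p.1 (chainM p k))

/-- The alternating chain of women: `w k` is the wife of `m k`. -/
def chainW {n : ℕ} (p : PairPerm n) (k : ℕ) : Fin (n + 2) := p.1 (chainM p k)

/-- `TStep p q` says that `q` is obtained from `p` by Zeilberger's map `T`: along the
alternating chain `m 0 = n, w 0, m 1, w 1, …` of `p`, which terminates at the first
woman `w (r-1) ∈ {1', n'}`, marriages `(m k, w k)` become affairs and affairs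
`(m (k+1), w k)` become marriages; everything off the chain is unchanged, and the
dummy values are set according to whether the chain ended at `1'` or at `n'`. -/
def TStep {n : ℕ} (p q : PairPerm n) : Prop :=
  ∃ r : ℕ, 1 ≤ r ∧
    (∀ k, k + 1 < r → chainW p k ≠ 0 ∧ chainW p k ≠ lastF n) ∧
    (chainW p (r - 1) = 0 ∨ chainW p (r - 1) = lastF n) ∧
    (∀ i, (∀ k, k < r → i ≠ chainM p k) → q.1 i = p.1 i) ∧
    (∀ i, i ≠ 0 → (∀ k, k < r → i ≠ chainM p k) → q.2 i = p.2 i) ∧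
    (∀ k, k + 1 < r → q.1 (chainM p (k + 1)) = chainW p k) ∧
    q.1 (lastF n) = chainW p (r - 1) ∧
    (∀ k, k < r → q.2 (chainM p k) = chainW p k) ∧
    q.2 0 = (if chainW p (r - 1) = 0 then lastF n else 0)


/-- The chain of `p` can be reconstructed from the image `q`: it is obtained by
iterating `q.1⁻¹ ∘ q.2` starting from the last index. -/
lemma chain_iter {n : ℕ} (p q : PairPerm n) (r : ℕ)
    (hq1 : ∀ k, k + 1 < r → q.1 (chainM p (k + 1)) = chainW p k)
    (hq2 : ∀ k, k < r → q.2 (chainM p k) = chainW p k) :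
    ∀ k, k < r → chainM p k = (fun x => q.1.symm (q.2 x))^[k] (lastF n) := by
  intro k
  induction k with
  | zero => intro _; simp [chainM]
  | succ k ih =>
    intro hk
    have hk2 : k < r := Nat.lt_of_succ_lt hk
    simp only [Function.iterate_succ_apply', ← ih hk2]
    rw [hq2 k hk2, ← hq1 k hk, Equiv.symm_apply_apply]

/-- Zeilberger's map `T` is an injection from `A(n)` into `B(n) ∪ C(n)`: the result of
a `T`-step lies in `B(n) ∪ C(n)`, and two elements of `A(n)` with the same image under
`T` are equal. -/
theorem T_injective {n : ℕ} (p p' q : PairPerm n) (hp : InA p) (hp' : InA p')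
    (h : TStep p q) (h' : TStep p' q) :
    (InB q ∨ InC q) ∧ p = p' := by
  obtain ⟨r, hr1, hmid, hend, hoff1, hoff2, hq1, hqlast, hq2, hq0⟩ := h
  obtain ⟨r2, hr12, hmid2, hend2, hoff12, hoff22, hq12, hqlast2, hq22, hq02⟩ := h'
  have hlast0 : (lastF n) ≠ 0 := by
    simp [lastF, Fin.ext_iff]
  have hiter := chain_iter p q r hq1 hq2
  have hiter2 := chain_iter p' q r2 hq12 hq22
  have hwq : ∀ k, k < r → k < r2 → chainW p k = chainW p' k := by
    intro k hk hk2
    rw [← hq2 k hk, ← hq22 k hk2, hiter k hk, hiter2 k hk2]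
  have hrr : r = r2 := by
    by_contra hne
    rcases Nat.lt_or_ge r r2 with hlt | hge
    · have h1 : r - 1 + 1 < r2 := by omega
      have h2 := hmid2 (r - 1) h1
      have h3 := hwq (r - 1) (by omega) (by omega)
      rcases hend with he | he
      · exact h2.1 (h3 ▸ he)
      · exact h2.2 (h3 ▸ he)
    · have hlt : r2 < r := by omega
      have h1 : r2 - 1 + 1 < r := by omega
      have h2 := hmid (r2 - 1) h1
      have h3 := hwq (r2 - 1) (by omega) (by omega)
      rcases hend2 with he | he
      · exact h2.1 (h3.symm ▸ he)
      · exact h2.2 (h3.symm ▸ he)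
  subst hrr
  have hm : ∀ k, k < r → chainM p k = chainM p' k := by
    intro k hk
    rw [hiter k hk, hiter2 k hk]
  have hw : ∀ k, k < r → chainW p k = chainW p' k := fun k hk => hwq k hk hk
  constructor
  · rcases hend with he | he
    · right
      exact ⟨by rw [hqlast, he], by rw [hq0, if_pos he]⟩
    · left
      exact ⟨by rw [hqlast, he], by rw [hq0, he, if_neg hlast0]⟩
  · have e1 : p.1 = p'.1 := by
      apply Equiv.ext; intro i
      by_cases hc : ∃ k, k < r ∧ i = chainM p k
      · obtain ⟨k, hk, hki⟩ := hc
        subst hki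
        have hthis : p.1 (chainM p k) = chainW p k := rfl
        rw [hthis, hw k hk, hm k hk]
        rfl
      · push_neg at hc
        have h1 := hoff1 i (fun k hk => hc k hk)
        have h2 := hoff12 i (fun k hk => (hm k hk) ▸ hc k hk)
        rw [← h1, ← h2]
    have e2 : p.2 = p'.2 := by
      apply Equiv.ext; intro i
      by_cases h0 : i = 0
      · subst h0; rw [hp.1, hp'.1]
      by_cases hc : ∃ k, k < r ∧ i = chainM p k
      · obtain ⟨k, hk, hki⟩ := hc
        subst hki
        match k with
        | 0 =>
          show p.2 (lastF n) = p'.2 (chainM p 0)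
          have hthis : chainM p 0 = lastF n := rfl
          rw [hthis, hp.2, hp'.2]
        | j + 1 =>
          have l1 : p.2 (chainM p (j + 1)) = chainW p j := by
            show p.2 (p.2.symm (p.1 (chainM p j))) = chainW p j
            rw [Equiv.apply_symm_apply]; rfl
          have l2 : p'.2 (chainM p' (j + 1)) = chainW p' j := by
            show p'.2 (p'.2.symm (p'.1 (chainM p' j))) = chainW p' j
            rw [Equiv.apply_symm_apply]; rfl
          rw [l1, hm (j + 1) hk, l2, hw j (Nat.lt_of_succ_lt hk)]
      · push_neg at hc
        have h1 := hoff2 i h0 (fun k hk => hc k hk)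
        have h2 := hoff22 i h0 (fun k hk => (hm k hk) ▸ hc k hk)
        rw [← h1, ← h2]
    exact Prod.ext e1 e2
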